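/- arXiv:2211.13374 — 6 statements merged into one kernel-verified Lean document; each statement's English description precedes it below -/
import Mathlib

section
/- Let ψ : (Fin d → ℝ) → ℝ be nonnegative and measurable with respect to Lebesgue measure, and assume that the function y ↦ (G y) i * (G y) j * ψ y is Lebesgue integrable for every i j : ι. Define the matrix Λ : Matrix ι ι ℝ by Λ i j = ∫ (G y) i * (G y) j * ψ y dy. If G(x)ᵀ Λ G(x) = 0 for every x : Fin d → ℝ, then ψ = 0 almost everywhere, and consequently Λ = 0. (This is the integral form of Lemma 4.3: G(x)ᵀΛG(x) = ∫ (G(x)ᵀG(y))² ψ(y) dy, and a nonzero nonnegative ψ would make this positive somewhere.) -/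
open MeasureTheory

/-- integral form of Lemma 4.3: if `ψ ≥ 0` is measurable,
`Λ i j = ∫ (G y)ᵢ (G y)ⱼ ψ(y) dy`, and `G(x)ᵀ Λ G(x) = 0` for every `x`,
then `ψ = 0` almost everywhere, and consequently `Λ = 0`. -/
theorem integral_quadForm_zero_imp_density_zero (n d : ℕ) (hd : 1 ≤ d)
    (ψ : (Fin d → ℝ) → ℝ) (hψ0 : ∀ y, 0 ≤ ψ y) (hψm : Measurable ψ)
    (hint : ∀ i j : Fin d → Fin (n + 1),
      Integrable (fun y : Fin d → ℝ =>
        (∏ t, y t ^ (i t : ℕ)) * (∏ t, y t ^ (j t : ℕ)) * ψ y))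
    (Λ : Matrix (Fin d → Fin (n + 1)) (Fin d → Fin (n + 1)) ℝ)
    (hΛ : ∀ i j, Λ i j =
      ∫ y : Fin d → ℝ, (∏ t, y t ^ (i t : ℕ)) * (∏ t, y t ^ (j t : ℕ)) * ψ y)
    (hq : ∀ x : Fin d → ℝ,
      ∑ i, ∑ j, (∏ t, x t ^ (i t : ℕ)) * Λ i j * (∏ t, x t ^ (j t : ℕ)) = 0) :
    (∀ᵐ y : Fin d → ℝ ∂volume, ψ y = 0) ∧ Λ = 0 := by
  set F : (Fin d → ℝ) → ℝ :=
    fun y => (∑ i : Fin d → Fin (n + 1), ∏ t, y t ^ (i t : ℕ)) ^ 2 * ψ y with hF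
  have hFeq : ∀ y, F y = ∑ i : Fin d → Fin (n + 1), ∑ j : Fin d → Fin (n + 1),
      (∏ t, y t ^ (i t : ℕ)) * (∏ t, y t ^ (j t : ℕ)) * ψ y := by
    intro y
    rw [hF]
    simp only [sq, Finset.sum_mul, Finset.mul_sum]
    rw [Finset.sum_comm]
  have hFint : Integrable F := by
    rw [show F = fun y => ∑ i : Fin d → Fin (n + 1), ∑ j : Fin d → Fin (n + 1),
        (∏ t, y t ^ (i t : ℕ)) * (∏ t, y t ^ (j t : ℕ)) * ψ y from funext hFeq]
    exact integrable_finset_sum _ fun i _ => integrable_finset_sum _ fun j _ => hint i j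
  have hFzero : ∫ y, F y = 0 := by
    calc ∫ y, F y
        = ∫ y, ∑ i : Fin d → Fin (n + 1), ∑ j : Fin d → Fin (n + 1),
            (∏ t, y t ^ (i t : ℕ)) * (∏ t, y t ^ (j t : ℕ)) * ψ y := by
          exact integral_congr_ae (Filter.Eventually.of_forall hFeq)
      _ = ∑ i : Fin d → Fin (n + 1), ∑ j : Fin d → Fin (n + 1),
            ∫ y, (∏ t, y t ^ (i t : ℕ)) * (∏ t, y t ^ (j t : ℕ)) * ψ y := by
          rw [integral_finset_sum _ fun i _ => integrable_finset_sum _ fun j _ => hint i j]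
          exact Finset.sum_congr rfl fun i _ => integral_finset_sum _ fun j _ => hint i j
      _ = ∑ i, ∑ j, Λ i j := by
          exact Finset.sum_congr rfl fun i _ => Finset.sum_congr rfl fun j _ => (hΛ i j).symm
      _ = 0 := by
          have := hq (fun _ => 1)
          simpa using this
  have hFnn : 0 ≤ F := fun y => mul_nonneg (sq_nonneg _) (hψ0 y)
  have hFae : F =ᵐ[volume] 0 :=
    (integral_eq_zero_iff_of_nonneg hFnn hFint).mp hFzero
  have hne : ∀ᵐ y : Fin d → ℝ ∂volume, ∀ t, y t ≠ (-1 : ℝ) := by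
    rw [MeasureTheory.ae_all_iff]
    intro t
    exact Measure.ae_eval_ne _ t (-1)
  have hψae : ∀ᵐ y : Fin d → ℝ ∂volume, ψ y = 0 := by
    filter_upwards [hFae, hne] with y hy hyne
    have hy' : (∑ i : Fin d → Fin (n + 1), ∏ t, y t ^ (i t : ℕ)) ^ 2 * ψ y = 0 := hy
    rcases mul_eq_zero.mp hy' with h | h
    · exfalso
      have hsum : (∑ i : Fin d → Fin (n + 1), ∏ t, y t ^ (i t : ℕ))
          = ∏ t, ∑ k : Fin (n + 1), y t ^ (k : ℕ) := (Fintype.prod_sum fun t (k : Fin (n+1)) => y t ^ (k : ℕ)).symm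
      have hfac : ∀ t, (∑ k : Fin (n + 1), y t ^ (k : ℕ)) ≠ 0 := by
        intro t
        have : ∑ k : Fin (n + 1), y t ^ (k : ℕ) = ∑ k ∈ Finset.range (n + 1), y t ^ k :=
          Fin.sum_univ_eq_sum_range _ _
        rw [this]
        exact geom_sum_ne_zero (hyne t) (Nat.succ_ne_zero n)
      have : (∑ i : Fin d → Fin (n + 1), ∏ t, y t ^ (i t : ℕ)) ≠ 0 := by
        rw [hsum]
        exact Finset.prod_ne_zero_iff.mpr fun t _ => hfac t
      exact this (pow_eq_zero_iff (n := 2) (by norm_num) |>.mp h)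
    · exact h
  refine ⟨hψae, ?_⟩
  ext i j
  rw [hΛ i j]
  have : (fun y : Fin d → ℝ => (∏ t, y t ^ (i t : ℕ)) * (∏ t, y t ^ (j t : ℕ)) * ψ y)
      =ᵐ[volume] 0 := by
    filter_upwards [hψae] with y hy
    simp [hy]
  simpa using integral_eq_zero_of_ae this
end

section
/- Let θ : (Fin d → ℝ) → ℝ be measurable with θ(x) > 0 for Lebesgue-almost every x. Let Λ₁ and Λ₂ be class-constant, symmetric, positive-definite matrices in Matrix ι ι ℝ, and set q_l(x) := G(x)ᵀ Λ_l G(x) for l = 1, 2 (both everywhere positive). Assume that for each l and all i j : ι the function x ↦ (G x) i * (G x) j * θ(x) / q_l(x) is Lebesgue integrable. If ∫ (G x) i * (G x) j * θ(x) / q₁(x) dx = ∫ (G x) i * (G x) j * θ(x) / q₂(x) dx for all i j : ι (i.e. ω(Λ₁) = ω(Λ₂)), then Λ₁ = Λ₂. (This is the injectivity part of Theorem 4.4: the moment map ω : Λ ↦ ∫ G(x) (θ(x)/q(x,Λ)) G(x)ᵀ dx is injective on positive-definite class-constant matrices.) -/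
open MeasureTheory

/-- The monomial vector `G(x) = G(x₁) ⊗ ⋯ ⊗ G(x_d)`. -/
noncomputable def Gvec (n d : ℕ) (x : Fin d → ℝ) (i : Fin d → Fin (n + 1)) : ℝ :=
  ∏ t, x t ^ (i t : ℕ)

/-- The quadratic form `q(x, Λ) = G(x)ᵀ Λ G(x)`. -/
noncomputable def quadForm (n d : ℕ)
    (Λ : Matrix (Fin d → Fin (n + 1)) (Fin d → Fin (n + 1)) ℝ)
    (x : Fin d → ℝ) : ℝ :=
  ∑ i, ∑ j, Gvec n d x i * Λ i j * Gvec n d x j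

/-- Class-constant matrices: all entries corresponding to the same power moment
are equal (the paper's parametrization (21)). -/
def ClassConstant (n d : ℕ)
    (Λ : Matrix (Fin d → Fin (n + 1)) (Fin d → Fin (n + 1)) ℝ) : Prop :=
  ∀ i j i' j' : Fin d → Fin (n + 1),
    (∀ t, (i t : ℕ) + (j t : ℕ) = (i' t : ℕ) + (j' t : ℕ)) → Λ i j = Λ i' j'

/-!
For `q₁, q₂, θ > 0`, `q₁/q₂ + q₂/q₁ - 2 = (q₁ - q₂)² / (q₁ q₂) ≥ 0`, so
`∫ θ q₁/q₂ + ∫ θ q₂/q₁ ≥ 2 ∫ θ`, with equality only if `q₁ = q₂` almost everywhere.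
Each integral `∫ θ q_Λ / q_M` is the pairing `∑ᵢⱼ Λᵢⱼ ω(M)ᵢⱼ`, so when `ω(Λ₁) = ω(Λ₂)` the
left-hand side equals `∫ θ q₁/q₁ + ∫ θ q₂/q₂ = 2 ∫ θ`. The quadratic forms are continuous,
so they then agree everywhere, and a class-constant matrix is determined by the coefficients
of its quadratic form, viewed as a polynomial.
-/

section AMGM

variable {α : Type*} [MeasurableSpace α] {μ : Measure α}

theorem ae_eq_of_integral_mul_div_add_le {f g θ : α → ℝ}
    (hf : ∀ᵐ x ∂μ, 0 < f x) (hg : ∀ᵐ x ∂μ, 0 < g x) (hθ : ∀ᵐ x ∂μ, 0 < θ x)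
    (hfg : Integrable (fun x => f x * θ x / g x) μ)
    (hgf : Integrable (fun x => g x * θ x / f x) μ) (hθi : Integrable θ μ)
    (h : ∫ x, f x * θ x / g x ∂μ + ∫ x, g x * θ x / f x ∂μ ≤ 2 * ∫ x, θ x ∂μ) :
    f =ᵐ[μ] g := by
  set r : α → ℝ := fun x => (f x - g x) ^ 2 * θ x / (f x * g x) with hr_def
  have hr : r =ᵐ[μ] fun x => f x * θ x / g x + g x * θ x / f x - 2 * θ x := by
    filter_upwards [hf, hg] with x hfx hgx
    rw [hr_def]
    field_simp
    ring
  have hr_nonneg : 0 ≤ᵐ[μ] r := by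
    filter_upwards [hf, hg, hθ] with x hfx hgx hθx
    positivity
  have hr_int : Integrable r μ := ((hfg.add hgf).sub (hθi.const_mul 2)).congr hr.symm
  have hr_zero : r =ᵐ[μ] 0 := by
    refine (integral_eq_zero_iff_of_nonneg_ae hr_nonneg hr_int).mp
      (le_antisymm ?_ (integral_nonneg_of_ae hr_nonneg))
    rw [integral_congr_ae hr, integral_sub (f := fun x => f x * θ x / g x + g x * θ x / f x)
      (hfg.add hgf) (hθi.const_mul 2),
      integral_add hfg hgf, integral_const_mul]
    linarith
  filter_upwards [hr_zero, hf, hg, hθ] with x hx hfx hgx hθx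
  have hsq : (f x - g x) ^ 2 = 0 := by
    simpa [r, hθx.ne', hfx.ne', hgx.ne'] using hx
  exact sub_eq_zero.mp (pow_eq_zero_iff two_ne_zero |>.mp hsq)

end AMGM

namespace Gvec

variable {n d : ℕ}

theorem ne_zero (x : Fin d → ℝ) : Gvec n d x ≠ 0 := fun h => by
  simpa [Gvec] using congrFun h 0

theorem continuous (i : Fin d → Fin (n + 1)) : Continuous fun x => Gvec n d x i :=
  continuous_finsetProd _ fun t _ => (continuous_apply t).pow _

end Gvec

noncomputable def momentMap (n d : ℕ) (θ : (Fin d → ℝ) → ℝ)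
    (Λ : Matrix (Fin d → Fin (n + 1)) (Fin d → Fin (n + 1)) ℝ) :
    Matrix (Fin d → Fin (n + 1)) (Fin d → Fin (n + 1)) ℝ :=
  fun i j => ∫ x, Gvec n d x i * Gvec n d x j * θ x / quadForm n d Λ x

section QuadForm

variable {n d : ℕ}

theorem quadForm_pos {Λ : Matrix (Fin d → Fin (n + 1)) (Fin d → Fin (n + 1)) ℝ}
    (hΛ : ∀ v : (Fin d → Fin (n + 1)) → ℝ, v ≠ 0 → 0 < ∑ i, ∑ j, v i * Λ i j * v j)
    (x : Fin d → ℝ) : 0 < quadForm n d Λ x :=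
  hΛ _ (Gvec.ne_zero x)

theorem continuous_quadForm (Λ : Matrix (Fin d → Fin (n + 1)) (Fin d → Fin (n + 1)) ℝ) :
    Continuous (quadForm n d Λ) :=
  continuous_finsetSum _ fun i _ => continuous_finsetSum _ fun j _ =>
    ((Gvec.continuous i).mul continuous_const).mul (Gvec.continuous j)

variable {θ : (Fin d → ℝ) → ℝ} {M : Matrix (Fin d → Fin (n + 1)) (Fin d → Fin (n + 1)) ℝ}

theorem quadForm_mul_div_eq_sum (Λ : Matrix (Fin d → Fin (n + 1)) (Fin d → Fin (n + 1)) ℝ)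
    (x : Fin d → ℝ) :
    quadForm n d Λ x * θ x / quadForm n d M x
      = ∑ i, ∑ j, Λ i j * (Gvec n d x i * Gvec n d x j * θ x / quadForm n d M x) := by
  simp only [quadForm, Finset.sum_mul, Finset.sum_div]
  refine Finset.sum_congr rfl fun i _ => Finset.sum_congr rfl fun j _ => ?_
  ring

variable (hint : ∀ i j : Fin d → Fin (n + 1),
  Integrable fun x => Gvec n d x i * Gvec n d x j * θ x / quadForm n d M x)
include hint

theorem integrable_quadForm_mul_div (Λ : Matrix (Fin d → Fin (n + 1)) (Fin d → Fin (n + 1)) ℝ) :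
    Integrable fun x => quadForm n d Λ x * θ x / quadForm n d M x := by
  simp_rw [quadForm_mul_div_eq_sum Λ]
  exact integrable_finsetSum _ fun i _ =>
    integrable_finsetSum _ fun j _ => (hint i j).const_mul _

theorem integral_quadForm_mul_div (Λ : Matrix (Fin d → Fin (n + 1)) (Fin d → Fin (n + 1)) ℝ) :
    ∫ x, quadForm n d Λ x * θ x / quadForm n d M x
      = ∑ i, ∑ j, Λ i j * momentMap n d θ M i j := by
  simp_rw [quadForm_mul_div_eq_sum Λ]
  rw [integral_finsetSum _ (f := fun i x => ∑ j, Λ i j * (Gvec n d x i * Gvec n d x j * θ x /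
    quadForm n d M x)) fun i _ => integrable_finsetSum _ fun j _ => (hint i j).const_mul _]
  refine Finset.sum_congr rfl fun i _ => ?_
  rw [integral_finsetSum _ fun j _ => (hint i j).const_mul _]
  exact Finset.sum_congr rfl fun j _ => integral_const_mul _ _

end QuadForm

section QuadPoly

open MvPolynomial Finset

variable {n d : ℕ}

noncomputable def pairExponent (i j : Fin d → Fin (n + 1)) : Fin d →₀ ℕ :=
  Finsupp.equivFunOnFinite.symm fun t => (i t : ℕ) + j t

theorem pairExponent_apply (i j : Fin d → Fin (n + 1)) (t : Fin d) :
    pairExponent i j t = (i t : ℕ) + j t :=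
  rfl

theorem pairExponent_eq_iff {i j i' j' : Fin d → Fin (n + 1)} :
    pairExponent i j = pairExponent i' j' ↔ ∀ t, (i t : ℕ) + j t = i' t + j' t := by
  simp only [Finsupp.ext_iff, pairExponent_apply]

variable (n) in
noncomputable def momentClass (e : Fin d →₀ ℕ) :
    Finset ((Fin d → Fin (n + 1)) × (Fin d → Fin (n + 1))) :=
  {p | pairExponent p.1 p.2 = e}

noncomputable def quadPoly (Λ : Matrix (Fin d → Fin (n + 1)) (Fin d → Fin (n + 1)) ℝ) :
    MvPolynomial (Fin d) ℝ :=
  ∑ i, ∑ j, monomial (pairExponent i j) (Λ i j)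

theorem eval_quadPoly (Λ : Matrix (Fin d → Fin (n + 1)) (Fin d → Fin (n + 1)) ℝ)
    (x : Fin d → ℝ) : eval x (quadPoly Λ) = quadForm n d Λ x := by
  simp only [quadPoly, quadForm, map_sum, eval_monomial]
  refine sum_congr rfl fun i _ => sum_congr rfl fun j _ => ?_
  rw [Finsupp.prod_fintype _ _ fun t => pow_zero (x t)]
  simp only [pairExponent_apply, pow_add, Gvec, prod_mul_distrib]
  ring

theorem coeff_quadPoly (Λ : Matrix (Fin d → Fin (n + 1)) (Fin d → Fin (n + 1)) ℝ)
    (e : Fin d →₀ ℕ) : coeff e (quadPoly Λ) = ∑ p ∈ momentClass n e, Λ p.1 p.2 := by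
  simp only [quadPoly, coeff_sum, coeff_monomial, momentClass, sum_filter,
    ← Fintype.sum_prod_type']

theorem ClassConstant.coeff_quadPoly
    {Λ : Matrix (Fin d → Fin (n + 1)) (Fin d → Fin (n + 1)) ℝ}
    (hΛ : ClassConstant n d Λ) (i j : Fin d → Fin (n + 1)) :
    coeff (pairExponent i j) (quadPoly Λ) = #(momentClass n (pairExponent i j)) * Λ i j := by
  rw [_root_.coeff_quadPoly, ← nsmul_eq_mul, ← sum_const]
  refine sum_congr rfl fun p hp => hΛ _ _ _ _ ?_
  exact pairExponent_eq_iff.mp (mem_filter.mp hp).2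

theorem ClassConstant.ext_of_quadForm_eq
    {Λ₁ Λ₂ : Matrix (Fin d → Fin (n + 1)) (Fin d → Fin (n + 1)) ℝ}
    (h₁ : ClassConstant n d Λ₁) (h₂ : ClassConstant n d Λ₂)
    (h : quadForm n d Λ₁ = quadForm n d Λ₂) : Λ₁ = Λ₂ := by
  have hP : quadPoly Λ₁ = quadPoly Λ₂ := funext fun x => by rw [eval_quadPoly, eval_quadPoly, h]
  ext i j
  have hcoeff := congrArg (coeff (pairExponent i j)) hP
  rw [ClassConstant.coeff_quadPoly h₁, ClassConstant.coeff_quadPoly h₂] at hcoeff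
  have hcard : (#(momentClass n (pairExponent i j)) : ℝ) ≠ 0 :=
    Nat.cast_ne_zero.mpr (card_ne_zero_of_mem (mem_filter.mpr ⟨mem_univ (i, j), rfl⟩))
  exact mul_left_cancel₀ hcard hcoeff

end QuadPoly

theorem moment_map_injective_general (n d : ℕ)
    (θ : (Fin d → ℝ) → ℝ)
    (hθpos : ∀ᵐ x : Fin d → ℝ ∂volume, 0 < θ x)
    (Λ₁ Λ₂ : Matrix (Fin d → Fin (n + 1)) (Fin d → Fin (n + 1)) ℝ)
    (hcc₁ : ClassConstant n d Λ₁) (hcc₂ : ClassConstant n d Λ₂)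
    (hpd₁ : ∀ v : (Fin d → Fin (n + 1)) → ℝ, v ≠ 0 →
      0 < ∑ i, ∑ j, v i * Λ₁ i j * v j)
    (hpd₂ : ∀ v : (Fin d → Fin (n + 1)) → ℝ, v ≠ 0 →
      0 < ∑ i, ∑ j, v i * Λ₂ i j * v j)
    (hint₁ : ∀ i j : Fin d → Fin (n + 1),
      Integrable (fun x : Fin d → ℝ =>
        Gvec n d x i * Gvec n d x j * θ x / quadForm n d Λ₁ x))
    (hint₂ : ∀ i j : Fin d → Fin (n + 1),
      Integrable (fun x : Fin d → ℝ =>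
        Gvec n d x i * Gvec n d x j * θ x / quadForm n d Λ₂ x))
    (heq : ∀ i j : Fin d → Fin (n + 1),
      (∫ x : Fin d → ℝ, Gvec n d x i * Gvec n d x j * θ x / quadForm n d Λ₁ x) =
      ∫ x : Fin d → ℝ, Gvec n d x i * Gvec n d x j * θ x / quadForm n d Λ₂ x) :
    Λ₁ = Λ₂ := by
  have hq₁ := quadForm_pos hpd₁
  have hq₂ := quadForm_pos hpd₂
  have hω : momentMap n d θ Λ₁ = momentMap n d θ Λ₂ := Matrix.ext heq
  have hself : ∀ {Λ : Matrix (Fin d → Fin (n + 1)) (Fin d → Fin (n + 1)) ℝ},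
      (∀ x, 0 < quadForm n d Λ x) → (fun x => quadForm n d Λ x * θ x / quadForm n d Λ x) = θ :=
    fun hq => funext fun x => mul_div_cancel_left₀ _ (hq x).ne'
  have hθ_int : Integrable θ := hself hq₁ ▸ integrable_quadForm_mul_div hint₁ Λ₁
  have hθ₁ : ∫ x, θ x = ∑ i, ∑ j, Λ₁ i j * momentMap n d θ Λ₁ i j := by
    rw [← integral_quadForm_mul_div hint₁, hself hq₁]
  have hθ₂ : ∫ x, θ x = ∑ i, ∑ j, Λ₂ i j * momentMap n d θ Λ₂ i j := by
    rw [← integral_quadForm_mul_div hint₂, hself hq₂]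
  refine ClassConstant.ext_of_quadForm_eq hcc₁ hcc₂ <|
    ((continuous_quadForm Λ₁).ae_eq_iff_eq volume (continuous_quadForm Λ₂)).mp <|
    ae_eq_of_integral_mul_div_add_le (.of_forall hq₁) (.of_forall hq₂) hθpos
      (integrable_quadForm_mul_div hint₂ Λ₁) (integrable_quadForm_mul_div hint₁ Λ₂) hθ_int ?_
  rw [integral_quadForm_mul_div hint₂, integral_quadForm_mul_div hint₁]
  rw [hω] at hθ₁ ⊢
  linarith

/-- injectivity part of Theorem 4.4: the moment map
`ω : Λ ↦ ∫ G(x) (θ(x)/q(x,Λ)) G(x)ᵀ dx` is injective on positive-definite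
class-constant matrices. -/
theorem moment_map_injective (n d : ℕ) (hd : 1 ≤ d)
    (θ : (Fin d → ℝ) → ℝ) (hθm : Measurable θ)
    (hθpos : ∀ᵐ x : Fin d → ℝ ∂volume, 0 < θ x)
    (Λ₁ Λ₂ : Matrix (Fin d → Fin (n + 1)) (Fin d → Fin (n + 1)) ℝ)
    (hcc₁ : ClassConstant n d Λ₁) (hcc₂ : ClassConstant n d Λ₂)
    (hsym₁ : Λ₁.transpose = Λ₁) (hsym₂ : Λ₂.transpose = Λ₂)
    (hpd₁ : ∀ v : (Fin d → Fin (n + 1)) → ℝ, v ≠ 0 →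
      0 < ∑ i, ∑ j, v i * Λ₁ i j * v j)
    (hpd₂ : ∀ v : (Fin d → Fin (n + 1)) → ℝ, v ≠ 0 →
      0 < ∑ i, ∑ j, v i * Λ₂ i j * v j)
    (hint₁ : ∀ i j : Fin d → Fin (n + 1),
      Integrable (fun x : Fin d → ℝ =>
        Gvec n d x i * Gvec n d x j * θ x / quadForm n d Λ₁ x))
    (hint₂ : ∀ i j : Fin d → Fin (n + 1),
      Integrable (fun x : Fin d → ℝ =>
        Gvec n d x i * Gvec n d x j * θ x / quadForm n d Λ₂ x))
    (heq : ∀ i j : Fin d → Fin (n + 1),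
      (∫ x : Fin d → ℝ, Gvec n d x i * Gvec n d x j * θ x / quadForm n d Λ₁ x) =
      ∫ x : Fin d → ℝ, Gvec n d x i * Gvec n d x j * θ x / quadForm n d Λ₂ x) :
    Λ₁ = Λ₂ :=
  moment_map_injective_general n d θ hθpos Λ₁ Λ₂ hcc₁ hcc₂ hpd₁ hpd₂ hint₁ hint₂ heq
end

section
/- Let θ and ρ be probability density functions on ℝᵈ with respect to Lebesgue measure (nonnegative, measurable, integrating to 1), and let q : (Fin d → ℝ) → ℝ be measurable with q(x) > 0 for a.e. x. Assume ρ(x) > 0 for a.e. x in {θ > 0}, and that the functions x ↦ θ(x) * Real.log (θ(x)/ρ(x)), x ↦ θ(x) * Real.log (q(x)), and x ↦ q(x) * ρ(x) are Lebesgue integrable. Then ∫ θ(x) * Real.log (θ(x)/ρ(x)) dx + ∫ q(x) * ρ(x) dx ≥ ∫ θ(x) * Real.log (q(x)) dx + 1, with equality if and only if ρ(x) = θ(x)/q(x) for almost every x. (This is the paper's variational claim that ρ = θ/q is the unique minimizer of the Lagrangian L(ρ,Λ) = KL(θ‖ρ) + ∫ q ρ − const over probability densities.) -/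
/-!
Pointwise, `θ log (θ/ρ) + qρ - θ log q - θ = qρ · klFun (θ / (qρ))` where `ρ > 0`, with
`klFun x = x log x + 1 - x ≥ 0` vanishing only at `x = 1`; where `θ = 0` the left side is `qρ`.
Integrating this nonnegative gap and using `∫ θ = 1` gives the inequality, and equality holds
exactly when the gap vanishes a.e., i.e. when `qρ = θ` a.e.
-/

open MeasureTheory InformationTheory

noncomputable def lagrangianGap (a b c : ℝ) : ℝ :=
  a * Real.log (a / b) + c * b - a * Real.log c - a

namespace lagrangianGap

lemma eq_mul_klFun (a : ℝ) {b c : ℝ} (hb : b ≠ 0) (hc : c ≠ 0) :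
    lagrangianGap a b c = c * b * klFun (a / (c * b)) := by
  rcases eq_or_ne a 0 with rfl | ha
  · simp [lagrangianGap, klFun_apply]
  have hlog : Real.log (a / (c * b)) = Real.log (a / b) - Real.log c := by
    rw [mul_comm, ← div_div, Real.log_div (div_ne_zero ha hb) hc]
  rw [lagrangianGap, klFun_apply, hlog]
  field_simp
  ring

lemma zero_left (b c : ℝ) : lagrangianGap 0 b c = c * b := by
  simp [lagrangianGap]

variable {a b c : ℝ}

lemma nonneg (ha : 0 ≤ a) (hb : 0 ≤ b) (hc : 0 < c) (hab : 0 < a → 0 < b) :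
    0 ≤ lagrangianGap a b c := by
  rcases ha.eq_or_lt with rfl | ha
  · rw [zero_left]; positivity
  · have hb_pos := hab ha
    rw [eq_mul_klFun a hb_pos.ne' hc.ne']
    exact mul_nonneg (by positivity) (klFun_nonneg (by positivity))

lemma eq_zero_iff (ha : 0 ≤ a) (hc : 0 < c) (hab : 0 < a → 0 < b) :
    lagrangianGap a b c = 0 ↔ b = a / c := by
  rcases ha.eq_or_lt with rfl | ha
  · simp [zero_left, hc.ne']
  · have hb := hab ha
    rw [eq_mul_klFun a hb.ne' hc.ne', mul_eq_zero, or_iff_right (by positivity),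
      klFun_eq_zero_iff (by positivity), div_eq_one_iff_eq (by positivity), eq_div_iff hc.ne',
      mul_comm, eq_comm]

end lagrangianGap

section Integral

variable {α : Type*} [MeasurableSpace α] {μ : Measure α} {θ ρ q : α → ℝ}

lemma integrable_lagrangianGap (hθ : Integrable θ μ)
    (h1 : Integrable (fun x => θ x * Real.log (θ x / ρ x)) μ)
    (h2 : Integrable (fun x => θ x * Real.log (q x)) μ) (h3 : Integrable (fun x => q x * ρ x) μ) :
    Integrable (fun x => lagrangianGap (θ x) (ρ x) (q x)) μ :=
  ((h1.add h3).sub h2).sub hθ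

lemma integral_lagrangianGap (hθ : Integrable θ μ)
    (h1 : Integrable (fun x => θ x * Real.log (θ x / ρ x)) μ)
    (h2 : Integrable (fun x => θ x * Real.log (q x)) μ) (h3 : Integrable (fun x => q x * ρ x) μ) :
    ∫ x, lagrangianGap (θ x) (ρ x) (q x) ∂μ =
      (∫ x, θ x * Real.log (θ x / ρ x) ∂μ) + (∫ x, q x * ρ x ∂μ)
        - (∫ x, θ x * Real.log (q x) ∂μ) - ∫ x, θ x ∂μ := by
  simp only [lagrangianGap]
  rw [integral_sub, integral_sub, integral_add h1 h3]
  exacts [h1.add h3, h2, (h1.add h3).sub h2, hθ]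

end Integral

theorem lagrangian_variational_inequality_general (d : ℕ)
    (θ ρ q : (Fin d → ℝ) → ℝ)
    (hθ0 : ∀ x, 0 ≤ θ x) (hθ1 : ∫ x : Fin d → ℝ, θ x = 1)
    (hρ0 : ∀ x, 0 ≤ ρ x)
    (hq : ∀ᵐ x : Fin d → ℝ ∂volume, 0 < q x)
    (hρpos : ∀ᵐ x : Fin d → ℝ ∂volume, 0 < θ x → 0 < ρ x)
    (h1 : Integrable (fun x : Fin d → ℝ => θ x * Real.log (θ x / ρ x)))
    (h2 : Integrable (fun x : Fin d → ℝ => θ x * Real.log (q x)))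
    (h3 : Integrable (fun x : Fin d → ℝ => q x * ρ x)) :
    ((∫ x : Fin d → ℝ, θ x * Real.log (θ x / ρ x)) + ∫ x : Fin d → ℝ, q x * ρ x
      ≥ (∫ x : Fin d → ℝ, θ x * Real.log (q x)) + 1) ∧
    (((∫ x : Fin d → ℝ, θ x * Real.log (θ x / ρ x)) + ∫ x : Fin d → ℝ, q x * ρ x
      = (∫ x : Fin d → ℝ, θ x * Real.log (q x)) + 1) ↔
      ∀ᵐ x : Fin d → ℝ ∂volume, ρ x = θ x / q x) := by
  have hθ : Integrable θ := Integrable.of_integral_ne_zero (by rw [hθ1]; exact one_ne_zero)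
  have hgap_int := integrable_lagrangianGap hθ h1 h2 h3
  have hgap := integral_lagrangianGap hθ h1 h2 h3
  rw [hθ1] at hgap
  have hgap_nonneg : 0 ≤ᵐ[volume] fun x => lagrangianGap (θ x) (ρ x) (q x) := by
    filter_upwards [hq, hρpos] with x hqx hρx
    exact lagrangianGap.nonneg (hθ0 x) (hρ0 x) hqx hρx
  have hgap_zero_iff : (fun x => lagrangianGap (θ x) (ρ x) (q x)) =ᵐ[volume] 0 ↔
      ∀ᵐ x, ρ x = θ x / q x := by
    refine Filter.eventually_congr ?_
    filter_upwards [hq, hρpos] with x hqx hρx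
    exact lagrangianGap.eq_zero_iff (hθ0 x) hqx hρx
  refine ⟨?_, ?_⟩
  · linarith [integral_nonneg_of_ae hgap_nonneg]
  · rw [← hgap_zero_iff, ← integral_eq_zero_iff_of_nonneg_ae hgap_nonneg hgap_int, hgap]
    constructor <;> intro h <;> linarith

/-- `ρ = θ/q` is the unique minimizer of the Lagrangian
`L(ρ,Λ) = KL(θ‖ρ) + ∫ q ρ − const` over probability densities:
`KL(θ‖ρ) + ∫ q ρ ≥ ∫ θ log q + 1`, with equality iff `ρ = θ/q` a.e. -/
theorem lagrangian_variational_inequality (d : ℕ)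
    (θ ρ q : (Fin d → ℝ) → ℝ)
    (hθ0 : ∀ x, 0 ≤ θ x) (hθm : Measurable θ) (hθ1 : ∫ x : Fin d → ℝ, θ x = 1)
    (hρ0 : ∀ x, 0 ≤ ρ x) (hρm : Measurable ρ) (hρ1 : ∫ x : Fin d → ℝ, ρ x = 1)
    (hqm : Measurable q) (hq : ∀ᵐ x : Fin d → ℝ ∂volume, 0 < q x)
    (hρpos : ∀ᵐ x : Fin d → ℝ ∂volume, 0 < θ x → 0 < ρ x)
    (h1 : Integrable (fun x : Fin d → ℝ => θ x * Real.log (θ x / ρ x)))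
    (h2 : Integrable (fun x : Fin d → ℝ => θ x * Real.log (q x)))
    (h3 : Integrable (fun x : Fin d → ℝ => q x * ρ x)) :
    ((∫ x : Fin d → ℝ, θ x * Real.log (θ x / ρ x)) + ∫ x : Fin d → ℝ, q x * ρ x
      ≥ (∫ x : Fin d → ℝ, θ x * Real.log (q x)) + 1) ∧
    (((∫ x : Fin d → ℝ, θ x * Real.log (θ x / ρ x)) + ∫ x : Fin d → ℝ, q x * ρ x
      = (∫ x : Fin d → ℝ, θ x * Real.log (q x)) + 1) ↔
      ∀ᵐ x : Fin d → ℝ ∂volume, ρ x = θ x / q x) :=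
  lagrangian_variational_inequality_general d θ ρ q hθ0 hθ1 hρ0 hq hρpos h1 h2 h3
end

section
/- Let ρ : (Fin d → ℝ) → ℝ be a probability density with respect to d-dimensional Lebesgue measure, and for each i : Fin d let ρᵢ : ℝ → ℝ be a nonnegative measurable function such that the pushforward of the measure volume.withDensity ρ under the coordinate map x ↦ x i equals volume.withDensity ρᵢ on ℝ (ρᵢ is the i-th marginal density of ρ). Assume x ↦ ρ(x) * Real.log (ρ(x)) and t ↦ ρᵢ(t) * Real.log (ρᵢ(t)) are integrable for each i, and that ρᵢ(x i) > 0 for (volume.withDensity ρ)-almost every x. Then the differential Shannon entropies satisfy −∫ ρ * Real.log ρ ≤ ∑ i, (−∫ ρᵢ * Real.log ρᵢ). (This is Theorem 5.3 of the paper, the full chain rule / subadditivity of differential entropy: H(ρ(x₁,…,x_d)) ≤ ∑ᵢ H(ρ(xᵢ)).) -/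
/-!
Let `q x = ∏ᵢ ρᵢ (x i)` be the product of the marginals; it is again a probability density.
Since `log` lies below its tangent `t - 1` at `1`, pointwise `ρ log q - ρ log ρ ≤ q - ρ`, and
integrating gives Gibbs' inequality `∫ ρ log q ≤ ∫ ρ log ρ`. Finally
`∫ ρ log q = ∑ᵢ ∫ ρ(x) log ρᵢ(xᵢ) dx = ∑ᵢ ∫ ρᵢ log ρᵢ`, because `ρᵢ` is the law of `x i` under `ρ`.
-/

open MeasureTheory Real

section WithDensity

variable {α β : Type*} [MeasurableSpace α] [MeasurableSpace β] {μ : Measure α} {f : α → ℝ}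

theorem integral_withDensity_ofReal (hf : AEMeasurable f μ) (hf0 : 0 ≤ᵐ[μ] f) (g : α → ℝ) :
    ∫ x, g x ∂μ.withDensity (fun x => ENNReal.ofReal (f x)) = ∫ x, f x * g x ∂μ := by
  rw [integral_withDensity_eq_integral_toReal_smul₀ hf.ennreal_ofReal
    (ae_of_all _ fun _ => ENNReal.ofReal_lt_top)]
  refine integral_congr_ae ?_
  filter_upwards [hf0] with x hx
  simp [ENNReal.toReal_ofReal hx]

theorem integrable_withDensity_ofReal_iff (hf : AEMeasurable f μ) (hf0 : 0 ≤ᵐ[μ] f)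
    {g : α → ℝ} :
    Integrable g (μ.withDensity fun x => ENNReal.ofReal (f x))
      ↔ Integrable (fun x => f x * g x) μ := by
  rw [integrable_withDensity_iff_integrable_smul₀' hf.ennreal_ofReal
    (ae_of_all _ fun _ => ENNReal.ofReal_lt_top)]
  refine integrable_congr ?_
  filter_upwards [hf0] with x hx
  simp [ENNReal.toReal_ofReal hx]

variable {ν : Measure β} {σ : β → ℝ} {T : α → β}

theorem integral_mul_comp_eq_of_map_withDensity (hf : AEMeasurable f μ) (hf0 : 0 ≤ᵐ[μ] f)
    (hσ : AEMeasurable σ ν) (hσ0 : 0 ≤ᵐ[ν] σ) (hT : Measurable T)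
    (hmap : (μ.withDensity fun x => ENNReal.ofReal (f x)).map T
      = ν.withDensity fun t => ENNReal.ofReal (σ t))
    {g : β → ℝ} (hg : Measurable g) :
    ∫ x, f x * g (T x) ∂μ = ∫ t, σ t * g t ∂ν := by
  rw [← integral_withDensity_ofReal hf hf0, ← integral_withDensity_ofReal hσ hσ0, ← hmap,
    integral_map hT.aemeasurable hg.aestronglyMeasurable]

theorem integrable_mul_comp_iff_of_map_withDensity (hf : AEMeasurable f μ) (hf0 : 0 ≤ᵐ[μ] f)
    (hσ : AEMeasurable σ ν) (hσ0 : 0 ≤ᵐ[ν] σ) (hT : Measurable T)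
    (hmap : (μ.withDensity fun x => ENNReal.ofReal (f x)).map T
      = ν.withDensity fun t => ENNReal.ofReal (σ t))
    {g : β → ℝ} (hg : Measurable g) :
    Integrable (fun x => f x * g (T x)) μ ↔ Integrable (fun t => σ t * g t) ν := by
  rw [← integrable_withDensity_ofReal_iff hf hf0, ← integrable_withDensity_ofReal_iff hσ hσ0,
    ← hmap, integrable_map_measure hg.aestronglyMeasurable hT.aemeasurable]
  rfl

theorem integrable_iff_of_map_withDensity (hf : AEMeasurable f μ) (hf0 : 0 ≤ᵐ[μ] f)
    (hσ : AEMeasurable σ ν) (hσ0 : 0 ≤ᵐ[ν] σ) (hT : Measurable T)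
    (hmap : (μ.withDensity fun x => ENNReal.ofReal (f x)).map T
      = ν.withDensity fun t => ENNReal.ofReal (σ t)) :
    Integrable f μ ↔ Integrable σ ν := by
  simpa using integrable_mul_comp_iff_of_map_withDensity hf hf0 hσ hσ0 hT hmap
    (g := fun _ => 1) measurable_const

theorem integral_eq_of_map_withDensity (hf : AEMeasurable f μ) (hf0 : 0 ≤ᵐ[μ] f)
    (hσ : AEMeasurable σ ν) (hσ0 : 0 ≤ᵐ[ν] σ) (hT : Measurable T)
    (hmap : (μ.withDensity fun x => ENNReal.ofReal (f x)).map T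
      = ν.withDensity fun t => ENNReal.ofReal (σ t)) :
    ∫ x, f x ∂μ = ∫ t, σ t ∂ν := by
  simpa using integral_mul_comp_eq_of_map_withDensity hf hf0 hσ hσ0 hT hmap
    (g := fun _ => 1) measurable_const

end WithDensity

theorem mul_log_sub_mul_log_le_sub {p q : ℝ} (hp : 0 ≤ p) (hq : 0 ≤ q) (hpq : 0 < p → 0 < q) :
    p * log q - p * log p ≤ q - p := by
  rcases hp.eq_or_lt with rfl | hp
  · simpa using hq
  have hq := hpq hp
  have h := log_le_sub_one_of_pos (div_pos hq hp)
  rw [log_div hq.ne' hp.ne'] at h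
  calc p * log q - p * log p = p * (log q - log p) := by ring
    _ ≤ p * (q / p - 1) := mul_le_mul_of_nonneg_left h hp.le
    _ = q - p := by field_simp

theorem integral_mul_log_le_integral_mul_log_self {α : Type*} [MeasurableSpace α]
    {μ : Measure α} {p q : α → ℝ} (hp0 : 0 ≤ᵐ[μ] p) (hq0 : 0 ≤ᵐ[μ] q)
    (hpq : ∀ᵐ x ∂μ, 0 < p x → 0 < q x) (hp : Integrable p μ) (hq : Integrable q μ)
    (hpq_int : ∫ x, q x ∂μ ≤ ∫ x, p x ∂μ)
    (hplogp : Integrable (fun x => p x * log (p x)) μ)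
    (hplogq : Integrable (fun x => p x * log (q x)) μ) :
    ∫ x, p x * log (q x) ∂μ ≤ ∫ x, p x * log (p x) ∂μ := by
  have h : ∫ x, (p x * log (q x) - p x * log (p x)) ∂μ ≤ ∫ x, (q x - p x) ∂μ := by
    refine integral_mono_ae (hplogq.sub hplogp) (hq.sub hp) ?_
    filter_upwards [hp0, hq0, hpq] with x hpx hqx hpqx
    exact mul_log_sub_mul_log_le_sub hpx hqx hpqx
  rw [integral_sub hplogq hplogp, integral_sub hq hp] at h
  linarith

theorem mul_log_prod_eq_sum_mul_log {ι : Type*} (s : Finset ι) {a : ℝ} {b : ι → ℝ}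
    (ha : 0 ≤ a) (hb : 0 < a → ∀ i ∈ s, 0 < b i) :
    a * log (∏ i ∈ s, b i) = ∑ i ∈ s, a * log (b i) := by
  rcases ha.eq_or_lt with rfl | ha
  · simp
  · rw [log_prod fun i hi => (hb ha i hi).ne', Finset.mul_sum]

theorem integrable_mul_log_prod_marginals_and_integral_eq {ι E : Type*} [Fintype ι]
    [MeasureSpace E] {ρ : (ι → E) → ℝ} {ρmarg : ι → E → ℝ} (hρ0 : ∀ x, 0 ≤ ρ x)
    (hρm : Measurable ρ) (hm0 : ∀ i t, 0 ≤ ρmarg i t) (hmm : ∀ i, Measurable (ρmarg i))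
    (hmarg : ∀ i, (volume.withDensity fun x => ENNReal.ofReal (ρ x)).map (fun x => x i)
      = volume.withDensity fun t => ENNReal.ofReal (ρmarg i t))
    (hlogm : ∀ i, Integrable fun t => ρmarg i t * log (ρmarg i t))
    (hpos : ∀ᵐ x, 0 < ρ x → ∀ i, 0 < ρmarg i (x i)) :
    Integrable (fun x => ρ x * log (∏ i, ρmarg i (x i)))
      ∧ ∫ x, ρ x * log (∏ i, ρmarg i (x i)) = ∑ i, ∫ t, ρmarg i t * log (ρmarg i t) := by
  have hlog_comp i : Integrable fun x => ρ x * log (ρmarg i (x i)) :=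
    (integrable_mul_comp_iff_of_map_withDensity hρm.aemeasurable (ae_of_all _ hρ0)
      (hmm i).aemeasurable (ae_of_all _ (hm0 i)) (measurable_pi_apply i) (hmarg i)
      (hmm i).log).2 (hlogm i)
  have hsplit : (fun x => ρ x * log (∏ i, ρmarg i (x i)))
      =ᵐ[volume] fun x => ∑ i, ρ x * log (ρmarg i (x i)) := by
    filter_upwards [hpos] with x hx
    exact mul_log_prod_eq_sum_mul_log _ (hρ0 x) fun h i _ => hx h i
  refine ⟨(integrable_congr hsplit).2 (integrable_finsetSum _ fun i _ => hlog_comp i), ?_⟩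
  rw [integral_congr_ae hsplit, integral_finsetSum _ fun i _ => hlog_comp i]
  exact Finset.sum_congr rfl fun i _ => integral_mul_comp_eq_of_map_withDensity hρm.aemeasurable
    (ae_of_all _ hρ0) (hmm i).aemeasurable (ae_of_all _ (hm0 i)) (measurable_pi_apply i)
    (hmarg i) (hmm i).log

/-- Theorem 5.3, subadditivity of differential entropy:
`H(ρ(x₁,…,x_d)) ≤ ∑ᵢ H(ρᵢ)` where `ρᵢ` is the `i`-th marginal density of `ρ`. -/
theorem entropy_subadditive (d : ℕ)
    (ρ : (Fin d → ℝ) → ℝ) (hρ0 : ∀ x, 0 ≤ ρ x) (hρm : Measurable ρ)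
    (hρi : Integrable ρ) (hρ1 : ∫ x : Fin d → ℝ, ρ x = 1)
    (ρmarg : Fin d → ℝ → ℝ)
    (hm0 : ∀ i t, 0 ≤ ρmarg i t) (hmm : ∀ i, Measurable (ρmarg i))
    (hmarg : ∀ i : Fin d,
      (volume.withDensity (fun x : Fin d → ℝ => ENNReal.ofReal (ρ x))).map
          (fun x : Fin d → ℝ => x i)
        = volume.withDensity (fun t : ℝ => ENNReal.ofReal (ρmarg i t)))
    (hlog : Integrable (fun x : Fin d → ℝ => ρ x * Real.log (ρ x)))
    (hlogm : ∀ i, Integrable (fun t : ℝ => ρmarg i t * Real.log (ρmarg i t)))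
    (hpos : ∀ i : Fin d,
      ∀ᵐ x : Fin d → ℝ
        ∂(volume.withDensity (fun x : Fin d → ℝ => ENNReal.ofReal (ρ x))),
        0 < ρmarg i (x i)) :
    -∫ x : Fin d → ℝ, ρ x * Real.log (ρ x)
      ≤ ∑ i : Fin d, -∫ t : ℝ, ρmarg i t * Real.log (ρmarg i t) := by
  have hmarg_int i : Integrable (ρmarg i) :=
    (integrable_iff_of_map_withDensity hρm.aemeasurable (ae_of_all _ hρ0) (hmm i).aemeasurable
      (ae_of_all _ (hm0 i)) (measurable_pi_apply i) (hmarg i)).1 hρi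
  have hmarg_one i : ∫ t, ρmarg i t = 1 := by
    rw [← hρ1, integral_eq_of_map_withDensity hρm.aemeasurable (ae_of_all _ hρ0)
      (hmm i).aemeasurable (ae_of_all _ (hm0 i)) (measurable_pi_apply i) (hmarg i)]
  have hprod_int : Integrable fun x : Fin d → ℝ => ∏ i, ρmarg i (x i) := by
    simpa only [volume_pi] using Integrable.fintype_prod hmarg_int
  have hprod_one : ∫ x : Fin d → ℝ, ∏ i, ρmarg i (x i) = 1 := by
    rw [volume_pi, integral_fintype_prod_eq_prod (fun i => ρmarg i)]
    simp [hmarg_one]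
  have hpos' : ∀ᵐ x, 0 < ρ x → ∀ i, 0 < ρmarg i (x i) := by
    simpa [ae_withDensity_iff hρm.ennreal_ofReal] using ae_all_iff.2 hpos
  obtain ⟨hlog_prod, hlog_prod_eq⟩ := integrable_mul_log_prod_marginals_and_integral_eq
    hρ0 hρm hm0 hmm hmarg hlogm hpos'
  have gibbs := integral_mul_log_le_integral_mul_log_self (ae_of_all _ hρ0)
    (ae_of_all _ fun x => Finset.prod_nonneg fun i _ => hm0 i (x i))
    (hpos'.mono fun x hx h => Finset.prod_pos fun i _ => hx h i) hρi hprod_int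
    (by rw [hprod_one, hρ1]) hlog hlog_prod
  rw [hlog_prod_eq] at gibbs
  simpa only [Finset.sum_neg_distrib, neg_le_neg_iff] using gibbs
end

section
/- Fix n d : ℕ with 1 ≤ d, and let λ assign a real coefficient λ(κ) to every multi-index κ : Fin d → ℕ with κ t ≤ 2n for all t. For such κ let ℛ_κ := {(i, j) : ι × ι | ∀ t, (i t : ℕ) + (j t : ℕ) = κ t}; this set is finite and nonempty. Define the class-constant matrix Λ : Matrix ι ι ℝ by Λ i j = λ(fun t => (i t : ℕ) + (j t : ℕ)) / (cardinality of ℛ_{i+j}). Then for every x : Fin d → ℝ: G(x)ᵀ Λ G(x) = ∑ over multi-indices κ with κ t ≤ 2n of λ(κ) * ∏ t, (x t) ^ κ t. (This is the correctness of the paper's parametrization (19)–(21), identifying the quadratic-form parametrization q(x, Λ) with the linear parametrization q(x, Λ̆) = ∑_κ λ_κ x^κ.) -/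
/-- correctness of the parametrization (19)–(21): the quadratic
form `G(x)ᵀ Λ G(x)` of the class-constant matrix `Λ i j = λ(i+j) / #ℛ_{i+j}`
equals the linear parametrization `∑_κ λ_κ x^κ` over multi-indices `κ ≤ 2n`. -/
theorem quadForm_eq_linear_parametrization (n d : ℕ) (hd : 1 ≤ d)
    (lam : (Fin d → ℕ) → ℝ)
    (Λ : Matrix (Fin d → Fin (n + 1)) (Fin d → Fin (n + 1)) ℝ)
    (hΛ : ∀ i j : Fin d → Fin (n + 1),
      Λ i j = lam (fun t => (i t : ℕ) + (j t : ℕ)) /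
        ((Finset.univ.filter
          (fun p : (Fin d → Fin (n + 1)) × (Fin d → Fin (n + 1)) =>
            ∀ t, (p.1 t : ℕ) + (p.2 t : ℕ) = (i t : ℕ) + (j t : ℕ))).card : ℝ))
    (x : Fin d → ℝ) :
    ∑ i, ∑ j, (∏ t, x t ^ (i t : ℕ)) * Λ i j * (∏ t, x t ^ (j t : ℕ))
      = ∑ κ : Fin d → Fin (2 * n + 1),
          lam (fun t => (κ t : ℕ)) * ∏ t, x t ^ (κ t : ℕ) := by
  classical
  have hf : ∀ (p : (Fin d → Fin (n+1)) × (Fin d → Fin (n+1))) (t : Fin d),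
      (p.1 t : ℕ) + (p.2 t : ℕ) < 2 * n + 1 := by
    intro p t
    have h1 := (p.1 t).isLt
    have h2 := (p.2 t).isLt
    omega
  set f : (Fin d → Fin (n+1)) × (Fin d → Fin (n+1)) → (Fin d → Fin (2*n+1)) :=
    fun p t => ⟨(p.1 t : ℕ) + (p.2 t : ℕ), hf p t⟩ with hfdef
  have hstep : ∑ i, ∑ j, (∏ t, x t ^ (i t : ℕ)) * Λ i j * (∏ t, x t ^ (j t : ℕ))
      = ∑ p : (Fin d → Fin (n+1)) × (Fin d → Fin (n+1)),
          (∏ t, x t ^ (p.1 t : ℕ)) * Λ p.1 p.2 * (∏ t, x t ^ (p.2 t : ℕ)) := by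
    rw [Fintype.sum_prod_type]
  rw [hstep, ← Finset.sum_fiberwise Finset.univ f
    (fun p => (∏ t, x t ^ (p.1 t : ℕ)) * Λ p.1 p.2 * (∏ t, x t ^ (p.2 t : ℕ)))]
  refine Finset.sum_congr rfl ?_
  intro κ _
  have hfq : ∀ p : (Fin d → Fin (n+1)) × (Fin d → Fin (n+1)),
      f p = κ ↔ ∀ t, (p.1 t : ℕ) + (p.2 t : ℕ) = (κ t : ℕ) := by
    intro p
    simp only [hfdef, funext_iff, Fin.ext_iff]
  have hmem : ∀ p : (Fin d → Fin (n+1)) × (Fin d → Fin (n+1)),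
      p ∈ Finset.univ.filter (fun p => f p = κ) ↔
        ∀ t, (p.1 t : ℕ) + (p.2 t : ℕ) = (κ t : ℕ) := by
    intro p
    rw [Finset.mem_filter, hfq]
    simp
  have hκ : ∀ t, (κ t : ℕ) ≤ 2 * n := fun t => Nat.lt_succ_iff.mp (κ t).isLt
  have hne : (Finset.univ.filter (fun p => f p = κ)).Nonempty := by
    refine ⟨(fun t => ⟨min (κ t : ℕ) n, by have := hκ t; omega⟩,
             fun t => ⟨(κ t : ℕ) - min (κ t : ℕ) n, by have := hκ t; omega⟩), ?_⟩
    rw [hmem]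
    intro t
    simp only
    have := hκ t
    omega
  set S := Finset.univ.filter (fun p => f p = κ) with hS
  set N : ℕ := S.card with hN
  have hNpos : 0 < N := Finset.card_pos.mpr hne
  have hNne : (N : ℝ) ≠ 0 := by positivity
  calc ∑ p ∈ S, (∏ t, x t ^ (p.1 t : ℕ)) * Λ p.1 p.2 * (∏ t, x t ^ (p.2 t : ℕ))
      = ∑ _p ∈ S, lam (fun t => (κ t : ℕ)) * (∏ t, x t ^ (κ t : ℕ)) / N := by
        refine Finset.sum_congr rfl ?_
        intro p hp
        have hp' := (hmem p).mp hp
        have h1 : (fun t => (p.1 t : ℕ) + (p.2 t : ℕ)) = fun t => (κ t : ℕ) :=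
          funext hp'
        have h2 : Finset.univ.filter
            (fun q : (Fin d → Fin (n+1)) × (Fin d → Fin (n+1)) =>
              ∀ t, (q.1 t : ℕ) + (q.2 t : ℕ) = (p.1 t : ℕ) + (p.2 t : ℕ)) = S := by
          rw [hS]
          apply Finset.filter_congr
          intro q _
          rw [hfq q]
          exact ⟨fun h t => (h t).trans (hp' t), fun h t => (h t).trans (hp' t).symm⟩
        have hprod : (∏ t, x t ^ (p.1 t : ℕ)) * (∏ t, x t ^ (p.2 t : ℕ))
            = ∏ t, x t ^ (κ t : ℕ) := by
          rw [← Finset.prod_mul_distrib]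
          refine Finset.prod_congr rfl fun t _ => ?_
          rw [← pow_add, hp' t]
        rw [hΛ p.1 p.2, h1, h2, ← hN]
        have hre : (∏ t, x t ^ (p.1 t : ℕ)) * (lam (fun t => (κ t : ℕ)) / N) *
              (∏ t, x t ^ (p.2 t : ℕ))
            = lam (fun t => (κ t : ℕ)) / N *
              ((∏ t, x t ^ (p.1 t : ℕ)) * (∏ t, x t ^ (p.2 t : ℕ))) := by ring
        rw [hre, hprod]
        ring
    _ = N * (lam (fun t => (κ t : ℕ)) * (∏ t, x t ^ (κ t : ℕ)) / N) := by
        rw [Finset.sum_const, ← hN, nsmul_eq_mul]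
    _ = lam (fun t => (κ t : ℕ)) * ∏ t, x t ^ (κ t : ℕ) := by
        field_simp
end

section
/- Let θ : (Fin d → ℝ) → ℝ be nonnegative and measurable such that the set {x | θ x > 0} has positive Lebesgue measure, let q : (Fin d → ℝ) → ℝ be measurable with q(x) > 0 for every x, and let δΛ : Matrix ι ι ℝ be class-constant with δΛ ≠ 0. Then the second variation of the dual functional is strictly positive: ∫⁻ x, ENNReal.ofReal (θ(x) / (q(x))^2 * (G(x)ᵀ δΛ G(x))^2) > 0 (as a Lebesgue lower integral with values in [0, ∞]). (This is the strict positivity of δ²𝕁_θ(Λ; δΛ) = ∫ θ/q² (GᵀδΛG)² dx asserted in the proof of Lemma 4.5; it relies on the fact that for a nonzero class-constant δΛ the polynomial x ↦ G(x)ᵀ δΛ G(x) is not identically zero, hence nonzero off a Lebesgue-null set.) -/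
open MeasureTheory

/-- The zero set of a nonzero multivariate real polynomial is Lebesgue-null. -/
lemma mvpoly_zero_set_null :
    ∀ (d : ℕ) (p : MvPolynomial (Fin d) ℝ), p ≠ 0 →
      volume {x : Fin d → ℝ | MvPolynomial.eval x p = 0} = 0 := by
  intro d
  induction d with
  | zero =>
    intro p hp
    obtain ⟨a, rfl⟩ := MvPolynomial.C_surjective (Fin 0) p
    have ha : a ≠ 0 := fun h => hp (by simp [h])
    have : {x : Fin 0 → ℝ | MvPolynomial.eval x (MvPolynomial.C a) = 0} = ∅ := by
      ext x; simp [ha]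
    rw [this]
    exact measure_empty
  | succ d ih =>
    intro p hp
    set e : Polynomial (MvPolynomial (Fin d) ℝ) := MvPolynomial.finSuccEquiv ℝ d p with he_def
    have he : e ≠ 0 := by
      intro h
      apply hp
      have := congrArg (MvPolynomial.finSuccEquiv ℝ d).symm (he_def ▸ h)
      simpa using this
    obtain ⟨k, hk⟩ : ∃ k, e.coeff k ≠ 0 := by
      by_contra h
      push_neg at h
      exact he (Polynomial.ext fun k => by simp [h k])
    -- the zero set
    set S : Set (Fin (d + 1) → ℝ) := {x | MvPolynomial.eval x p = 0} with hS_def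
    have hSm : MeasurableSet S :=
      (isClosed_singleton.preimage (MvPolynomial.continuous_eval p)).measurableSet
    -- transfer to ℝ × (Fin d → ℝ)
    set E := MeasurableEquiv.piFinSuccAbove (fun _ : Fin (d + 1) => ℝ) 0 with hE_def
    have hmp : MeasurePreserving (⇑E) volume volume :=
      MeasureTheory.volume_preserving_piFinSuccAbove (fun _ : Fin (d + 1) => ℝ) 0
    set T : Set (ℝ × (Fin d → ℝ)) := ⇑E.symm ⁻¹' S with hT_def
    have hTm : MeasurableSet T := E.symm.measurable hSm
    have hST : ⇑E ⁻¹' T = S := by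
      ext x; simp [hT_def]
    have hvol : volume S = volume T := by
      rw [← hST]; exact hmp.measure_preimage hTm.nullMeasurableSet
    -- membership characterization of T
    have hTmem : ∀ (y : ℝ) (z : Fin d → ℝ),
        ((y, z) ∈ T ↔ Polynomial.eval y (Polynomial.map (MvPolynomial.eval z) e) = 0) := by
      intro y z
      have hsymm : E.symm (y, z) = Fin.cons y z := by
        ext j
        simp [hE_def, MeasurableEquiv.piFinSuccAbove, Fin.insertNth_zero]
      rw [hT_def]
      simp only [Set.mem_preimage, hsymm, hS_def, Set.mem_setOf_eq]
      rw [MvPolynomial.eval_eq_eval_mv_eval']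
    -- swap to integrate over second coordinate first
    have hswap : (volume : Measure (ℝ × (Fin d → ℝ))) T
        = ((volume : Measure (Fin d → ℝ)).prod (volume : Measure ℝ)) (Prod.swap ⁻¹' T) := by
      rw [MeasureTheory.Measure.volume_eq_prod, ← MeasureTheory.Measure.prod_swap,
        MeasureTheory.Measure.map_apply measurable_swap hTm]
    have hswapm : MeasurableSet (Prod.swap ⁻¹' T : Set ((Fin d → ℝ) × ℝ)) :=
      measurable_swap hTm
    have hnull : ((volume : Measure (Fin d → ℝ)).prod (volume : Measure ℝ))
        (Prod.swap ⁻¹' T) = 0 := by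
      rw [MeasureTheory.Measure.measure_prod_null hswapm]
      have hN : volume {z : Fin d → ℝ | MvPolynomial.eval z (e.coeff k) = 0} = 0 :=
        ih (e.coeff k) hk
      refine measure_mono_null ?_ hN
      intro z hz
      simp only [Set.mem_setOf_eq] at hz ⊢
      by_contra hzero
      apply hz
      have hne' : Polynomial.map (MvPolynomial.eval z) e ≠ 0 := by
        intro h
        apply hzero
        have := congrArg (fun r => Polynomial.coeff r k) h
        simpa [Polynomial.coeff_map] using this
      have hfin : Set.Finite {y : ℝ | Polynomial.IsRoot (Polynomial.map (MvPolynomial.eval z) e) y} :=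
        Polynomial.finite_setOf_isRoot hne'
      have hsub : (Prod.mk z ⁻¹' (Prod.swap ⁻¹' T))
          ⊆ {y : ℝ | Polynomial.IsRoot (Polynomial.map (MvPolynomial.eval z) e) y} := by
        intro y hy
        simp only [Set.mem_preimage, Prod.swap_prod_mk] at hy
        exact (hTmem y z).mp hy
      simpa using measure_mono_null hsub (hfin.measure_zero _)
    rw [hvol, hswap, hnull]

/-- strict positivity of the second variation `δ²𝕁_θ(Λ; δΛ)` in
the proof of Lemma 4.5. -/
theorem second_variation_positive (n d : ℕ) (hd : 1 ≤ d)
    (θ : (Fin d → ℝ) → ℝ) (hθ0 : ∀ x, 0 ≤ θ x) (hθm : Measurable θ)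
    (hθpos : 0 < volume {x : Fin d → ℝ | 0 < θ x})
    (q : (Fin d → ℝ) → ℝ) (hqm : Measurable q) (hq : ∀ x, 0 < q x)
    (δΛ : Matrix (Fin d → Fin (n + 1)) (Fin d → Fin (n + 1)) ℝ)
    (hcc : ClassConstant n d δΛ) (hne : δΛ ≠ 0) :
    0 < ∫⁻ x : Fin d → ℝ, ENNReal.ofReal (θ x / q x ^ 2 *
      (∑ i, ∑ j, Gvec n d x i * δΛ i j * Gvec n d x j) ^ 2) := by
  classical
  -- the quadratic form as a multivariate polynomial
  set m : (Fin d → Fin (n + 1)) → (Fin d → Fin (n + 1)) → (Fin d →₀ ℕ) :=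
    fun i j => Finsupp.equivFunOnFinite.symm (fun t => (i t : ℕ) + (j t : ℕ)) with hm_def
  set p : MvPolynomial (Fin d) ℝ :=
    ∑ i, ∑ j, MvPolynomial.monomial (m i j) (δΛ i j) with hp_def
  have hm_apply : ∀ i j t, (m i j) t = (i t : ℕ) + (j t : ℕ) := by
    intro i j t; simp [hm_def]
  have heval : ∀ x : Fin d → ℝ,
      MvPolynomial.eval x p = ∑ i, ∑ j, Gvec n d x i * δΛ i j * Gvec n d x j := by
    intro x
    rw [hp_def]
    simp only [map_sum, MvPolynomial.eval_monomial]
    refine Finset.sum_congr rfl fun i _ => Finset.sum_congr rfl fun j _ => ?_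
    rw [Finsupp.prod_fintype _ _ (fun t => pow_zero (x t))]
    simp only [hm_apply]
    unfold Gvec
    simp_rw [pow_add, Finset.prod_mul_distrib]
    ring
  -- p ≠ 0
  obtain ⟨i₀, j₀, hv⟩ : ∃ i j, δΛ i j ≠ 0 := by
    by_contra h
    push_neg at h
    exact hne (by ext i j; simp [h i j])
  have hp_ne : p ≠ 0 := by
    intro hp0
    have hco : MvPolynomial.coeff (m i₀ j₀) p = 0 := by rw [hp0]; simp
    rw [hp_def] at hco
    simp only [MvPolynomial.coeff_sum, MvPolynomial.coeff_monomial] at hco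
    have hrw : ∀ i j : Fin d → Fin (n + 1),
        (if m i j = m i₀ j₀ then δΛ i j else 0)
          = (if m i j = m i₀ j₀ then δΛ i₀ j₀ else 0) := by
      intro i j
      split_ifs with h
      · refine hcc i j i₀ j₀ fun t => ?_
        have := congrArg (fun f => f t) (congrArg Finsupp.equivFunOnFinite h)
        simpa [hm_def] using this
      · rfl
    simp_rw [hrw] at hco
    rw [← Finset.sum_product'] at hco
    rw [← Finset.sum_filter, Finset.sum_const, nsmul_eq_mul] at hco
    have hcard : ((Finset.univ ×ˢ Finset.univ).filter
        (fun ij : (Fin d → Fin (n + 1)) × (Fin d → Fin (n + 1)) => m ij.1 ij.2 = m i₀ j₀)).Nonempty := by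
      exact ⟨(i₀, j₀), by simp⟩
    have : (((Finset.univ ×ˢ Finset.univ).filter
        (fun ij : (Fin d → Fin (n + 1)) × (Fin d → Fin (n + 1)) => m ij.1 ij.2 = m i₀ j₀)).card : ℝ) ≠ 0 := by
      exact_mod_cast Finset.card_ne_zero_of_mem (hcard.choose_spec)
    exact hv (by
      rcases mul_eq_zero.mp hco with h | h
      · exact absurd h this
      · exact h)
  -- the polynomial function and its measurability
  have hPm : Measurable fun x : Fin d → ℝ =>
      ∑ i, ∑ j, Gvec n d x i * δΛ i j * Gvec n d x j := by
    have : (fun x : Fin d → ℝ => ∑ i, ∑ j, Gvec n d x i * δΛ i j * Gvec n d x j)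
        = fun x => MvPolynomial.eval x p := by
      funext x; rw [heval]
    rw [this]
    exact (MvPolynomial.continuous_eval p).measurable
  -- measurability of the integrand
  have hfm : Measurable fun x : Fin d → ℝ => ENNReal.ofReal (θ x / q x ^ 2 *
      (∑ i, ∑ j, Gvec n d x i * δΛ i j * Gvec n d x j) ^ 2) :=
    ((hθm.div (hqm.pow_const 2)).mul (hPm.pow_const 2)).ennreal_ofReal
  rw [MeasureTheory.lintegral_pos_iff_support hfm]
  -- the support contains {θ > 0} \ {eval p = 0}
  have hsub : {x : Fin d → ℝ | 0 < θ x} \ {x | MvPolynomial.eval x p = 0}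
      ⊆ Function.support fun x => ENNReal.ofReal (θ x / q x ^ 2 *
        (∑ i, ∑ j, Gvec n d x i * δΛ i j * Gvec n d x j) ^ 2) := by
    intro x hx
    obtain ⟨hθx, hPx⟩ := hx
    simp only [Set.mem_setOf_eq] at hθx hPx
    have hP : (∑ i, ∑ j, Gvec n d x i * δΛ i j * Gvec n d x j) ≠ 0 := by
      rw [← heval]; exact hPx
    have hpos : 0 < θ x / q x ^ 2 *
        (∑ i, ∑ j, Gvec n d x i * δΛ i j * Gvec n d x j) ^ 2 :=
      mul_pos (div_pos hθx (pow_pos (hq x) 2)) (pow_two_pos_of_ne_zero hP)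
    exact Function.mem_support.mpr (ENNReal.ofReal_pos.mpr hpos).ne'
  refine lt_of_lt_of_le ?_ (measure_mono hsub)
  rw [measure_diff_null (mvpoly_zero_set_null d p hp_ne)]
  exact hθpos
end
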